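/- arXiv:1907.01786 — 3 statements merged into one kernel-verified Lean document; each statement's English description precedes it below -/
import Mathlib

section
/- For every real number T > 0, one has T·(sinh(T) − 2·sinh(T/2)) ≤ (3/2)·(T·sinh(T) − 2·(cosh(T) − 1)). -/
/-!
With `x = T / 2`, the double-angle formulas turn the gap between the two sides into
`2 sinh x · (x cosh x + 2x - 3 sinh x)`. The second factor vanishes at `0` and its derivative
`x sinh x + 2 - 2 cosh x` vanishes at `0` too, as does the next derivative `x cosh x - sinh x`,
whose own derivative `x sinh x` is nonnegative for `x ≥ 0`; so all three are nonnegative on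
`[0, ∞)`.
-/

open Real

theorem le_of_hasDerivAt_of_nonneg {f f' : ℝ → ℝ} {a x : ℝ}
    (hf : ∀ y, HasDerivAt f (f' y) y) (hf' : ∀ y, a < y → 0 ≤ f' y) (hax : a ≤ x) :
    f a ≤ f x := by
  have hcont : Continuous f := continuous_iff_continuousAt.mpr fun y ↦ (hf y).continuousAt
  refine monotoneOn_of_hasDerivWithinAt_nonneg (convex_Ici a) hcont.continuousOn
    (fun y _ ↦ (hf y).hasDerivWithinAt) (fun y hy ↦ hf' y ?_) Set.self_mem_Ici hax hax
  rwa [interior_Ici] at hy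

namespace Real

theorem sinh_le_mul_cosh {x : ℝ} (hx : 0 ≤ x) : sinh x ≤ x * cosh x := by
  have hderiv (y : ℝ) : HasDerivAt (fun y ↦ y * cosh y - sinh y) (y * sinh y) y :=
    (((hasDerivAt_id' y).mul (hasDerivAt_cosh y)).sub (hasDerivAt_sinh y)).congr_deriv
      (by ring)
  have := le_of_hasDerivAt_of_nonneg hderiv
    (fun y hy ↦ mul_nonneg hy.le (sinh_nonneg_iff.mpr hy.le)) hx
  simpa using this

theorem two_mul_cosh_le {x : ℝ} (hx : 0 ≤ x) : 2 * cosh x ≤ x * sinh x + 2 := by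
  have hderiv (y : ℝ) :
      HasDerivAt (fun y ↦ y * sinh y + 2 - 2 * cosh y) (y * cosh y - sinh y) y :=
    ((((hasDerivAt_id' y).mul (hasDerivAt_sinh y)).add_const 2).sub
      ((hasDerivAt_cosh y).const_mul 2)).congr_deriv (by ring)
  have := le_of_hasDerivAt_of_nonneg hderiv
    (fun y hy ↦ sub_nonneg.mpr (sinh_le_mul_cosh hy.le)) hx
  simp only [zero_mul, zero_add, cosh_zero] at this
  linarith

theorem three_mul_sinh_le {x : ℝ} (hx : 0 ≤ x) : 3 * sinh x ≤ x * cosh x + 2 * x := by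
  have hderiv (y : ℝ) :
      HasDerivAt (fun y ↦ y * cosh y + 2 * y - 3 * sinh y) (y * sinh y + 2 - 2 * cosh y) y :=
    ((((hasDerivAt_id' y).mul (hasDerivAt_cosh y)).add
      ((hasDerivAt_id' y).const_mul 2)).sub ((hasDerivAt_sinh y).const_mul 3)).congr_deriv
      (by ring)
  have := le_of_hasDerivAt_of_nonneg hderiv
    (fun y hy ↦ sub_nonneg.mpr (two_mul_cosh_le hy.le)) hx
  simp only [zero_mul, mul_zero, add_zero, sinh_zero, sub_zero] at this
  linarith

end Real

theorem key_hyperbolic_inequality_gap_eq (T : ℝ) :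
    (3 / 2) * (T * sinh T - 2 * (cosh T - 1)) - T * (sinh T - 2 * sinh (T / 2)) =
      2 * sinh (T / 2) * (T / 2 * cosh (T / 2) + 2 * (T / 2) - 3 * sinh (T / 2)) := by
  obtain ⟨x, rfl⟩ : ∃ x, T = 2 * x := ⟨T / 2, by ring⟩
  rw [mul_div_cancel_left₀ x two_ne_zero, sinh_two_mul, cosh_two_mul, cosh_sq]
  ring

/-- Key analytic inequality: for every real `T > 0`,
`T * (sinh T - 2 * sinh (T/2)) ≤ (3/2) * (T * sinh T - 2 * (cosh T - 1))`. -/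
theorem key_hyperbolic_inequality (T : ℝ) (hT : 0 < T) :
    T * (Real.sinh T - 2 * Real.sinh (T / 2)) ≤
      (3 / 2) * (T * Real.sinh T - 2 * (Real.cosh T - 1)) := by
  have hx : 0 ≤ T / 2 := by positivity
  rw [← sub_nonneg, key_hyperbolic_inequality_gap_eq]
  exact mul_nonneg (mul_nonneg zero_le_two (sinh_nonneg_iff.mpr hx))
    (sub_nonneg.mpr (three_mul_sinh_le hx))
end

section
/- For every real number T > 0, one has 2·sinh(T/2)·(cosh(T/2) − 1)/(T·sinh(T) − 2·(cosh(T) − 1)) ≤ 3/(2·T); that is, the midpoint value of the optimal velocity satisfies |v*(T/2)| ≤ (3·|q̃|/2)/T. -/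
/-!
With `x = T / 2`, the double-angle formulas factor the denominator as
`4 sinh x (x cosh x - sinh x)`, so after cancelling `sinh x` the bound is equivalent to
`3 sinh x < x cosh x + 2 x`. That inequality is the last of a chain of three, each following
from the previous one by differentiating the difference of its two sides, which vanishes at `0`:
`(x cosh x - sinh x)' = x sinh x`, `(x sinh x + 2 - 2 cosh x)' = x cosh x - sinh x` and
`(x cosh x + 2 x - 3 sinh x)' = x sinh x + 2 - 2 cosh x`.
-/

open Real Set

lemma strictMonoOn_Ici_of_hasDerivAt_pos {f f' : ℝ → ℝ} {a : ℝ}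
    (hf : ∀ x, HasDerivAt f (f' x) x) (hf' : ∀ x, a < x → 0 < f' x) :
    StrictMonoOn f (Ici a) :=
  strictMonoOn_of_hasDerivWithinAt_pos (convex_Ici a)
    (continuous_iff_continuousAt.2 (fun x ↦ (hf x).continuousAt)).continuousOn
    (fun x _ ↦ (hf x).hasDerivWithinAt)
    (fun x hx ↦ hf' x (by rwa [interior_Ici] at hx))

namespace Real

variable {x : ℝ}

lemma sinh_lt_mul_cosh (hx : 0 < x) : sinh x < x * cosh x := by
  have hderiv : ∀ y : ℝ, HasDerivAt (fun y ↦ y * cosh y - sinh y) (y * sinh y) y := fun y ↦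
    (((hasDerivAt_id' y).mul (hasDerivAt_cosh y)).sub (hasDerivAt_sinh y)).congr_deriv (by ring)
  have := strictMonoOn_Ici_of_hasDerivAt_pos hderiv (fun y hy ↦ mul_pos hy (sinh_pos_iff.2 hy))
    self_mem_Ici hx.le hx
  simp only [zero_mul, sinh_zero, sub_zero] at this
  linarith

lemma two_mul_cosh_lt_mul_sinh_add_two (hx : 0 < x) : 2 * cosh x < x * sinh x + 2 := by
  have hderiv : ∀ y : ℝ, HasDerivAt (fun y ↦ y * sinh y + 2 - 2 * cosh y)
      (y * cosh y - sinh y) y := fun y ↦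
    ((((hasDerivAt_id' y).mul (hasDerivAt_sinh y)).add_const 2).sub
      ((hasDerivAt_cosh y).const_mul 2)).congr_deriv (by ring)
  have := strictMonoOn_Ici_of_hasDerivAt_pos hderiv
    (fun y hy ↦ sub_pos.2 (sinh_lt_mul_cosh hy)) self_mem_Ici hx.le hx
  simp only [zero_mul, cosh_zero] at this
  linarith

lemma three_mul_sinh_lt_mul_cosh_add_two_mul (hx : 0 < x) :
    3 * sinh x < x * cosh x + 2 * x := by
  have hderiv : ∀ y : ℝ, HasDerivAt (fun y ↦ y * cosh y + 2 * y - 3 * sinh y)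
      (y * sinh y + 2 - 2 * cosh y) y := fun y ↦
    ((((hasDerivAt_id' y).mul (hasDerivAt_cosh y)).add ((hasDerivAt_id' y).const_mul 2)).sub
      ((hasDerivAt_sinh y).const_mul 3)).congr_deriv (by ring)
  have := strictMonoOn_Ici_of_hasDerivAt_pos hderiv
    (fun y hy ↦ sub_pos.2 (two_mul_cosh_lt_mul_sinh_add_two hy)) self_mem_Ici hx.le hx
  simp only [zero_mul, sinh_zero] at this
  linarith

lemma mul_sinh_sub_two_mul_cosh_sub_one (x : ℝ) :
    x * sinh x - 2 * (cosh x - 1) = 4 * sinh (x / 2) * (x / 2 * cosh (x / 2) - sinh (x / 2)) := by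
  conv_lhs => rw [← mul_div_cancel₀ x two_ne_zero, sinh_two_mul, cosh_two_mul, cosh_sq']
  ring

end Real

/-- Midpoint bound: for every real `T > 0`,
`2 sinh(T/2) (cosh(T/2) - 1) / (T sinh T - 2 (cosh T - 1)) ≤ 3 / (2 T)`. -/
theorem midpoint_velocity_bound (T : ℝ) (hT : 0 < T) :
    2 * Real.sinh (T / 2) * (Real.cosh (T / 2) - 1) /
        (T * Real.sinh T - 2 * (Real.cosh T - 1)) ≤ 3 / (2 * T) := by
  have hx : 0 < T / 2 := half_pos hT
  have hs : 0 < sinh (T / 2) := sinh_pos_iff.2 hx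
  have hgap : 0 < T / 2 * cosh (T / 2) - sinh (T / 2) := sub_pos.2 (sinh_lt_mul_cosh hx)
  rw [mul_sinh_sub_two_mul_cosh_sub_one, div_le_div_iff₀ (by positivity) (by positivity)]
  linarith [mul_pos hs (sub_pos.2 (three_mul_sinh_lt_mul_cosh_add_two_mul hx))]
end

section
/- Solution of the two-point boundary value problem: let T > 0 and q₀, q_T, v₀, v_T be real numbers, and set D := 2·(cosh(T) − 1) − T·sinh(T) (which is nonzero), λ₁ := (sinh(T)·(q_T − q₀) + (1 − cosh(T))·(v₀ + v_T))/D, and λ₂ := (cosh(T)·v₀ − v_T + (cosh(T) − 1)·λ₁)/sinh(T) (well defined since sinh(T) ≠ 0). Then the vector x(T) := exp(T·H)·(q₀, v₀, λ₁, λ₂)ᵀ, where H is the 4×4 real matrix with rows (0, 1, 0, 0), (0, 0, 0, −1), (0, 0, 0, 0), (0, −1, −1, 0), satisfies x(T)₁ = q_T and x(T)₂ = v_T. -/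
/-!
Since `H ^ 4 = H ^ 2`, the even and odd parts of the exponential series of `T • H` collapse onto
`H ^ 2` and `H ^ 3`, giving `exp (T • H) = 1 + T • H + (cosh T - 1) • H ^ 2 + (sinh T - T) • H ^ 3`.
The two boundary conditions thus become linear equations in `λ₁, λ₂`, solved by the stated values
once one knows `sinh T ≠ 0` and `D ≠ 0`. For the latter, halving the argument turns `D < 0` into
`tanh u < u` for `u = T / 2`.
-/
open Nat Real Matrix

section PowFour
variable {M : Type*} [Monoid M] {a : M}

theorem pow_two_mul_of_pow_four_eq_sq (h : a ^ 4 = a ^ 2) {k : ℕ} (hk : k ≠ 0) :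
    a ^ (2 * k) = a ^ 2 := by
  induction k with
  | zero => exact (hk rfl).elim
  | succ k ih =>
    rcases eq_or_ne k 0 with rfl | hk'
    · rfl
    · rw [mul_add, pow_add, ih hk', ← pow_add, h]

theorem pow_two_mul_add_one_of_pow_four_eq_sq (h : a ^ 4 = a ^ 2) {k : ℕ} (hk : k ≠ 0) :
    a ^ (2 * k + 1) = a ^ 3 := by
  rw [pow_succ, pow_two_mul_of_pow_four_eq_sq h hk, ← pow_succ]

end PowFour

theorem exp_smul_of_pow_four_eq_sq {𝔸 : Type*} [Ring 𝔸] [Algebra ℝ 𝔸] [TopologicalSpace 𝔸]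
    [IsTopologicalRing 𝔸] [ContinuousSMul ℝ 𝔸] [T2Space 𝔸] {A : 𝔸} (hA : A ^ 4 = A ^ 2) (t : ℝ) :
    NormedSpace.exp (t • A) = 1 + t • A + (cosh t - 1) • A ^ 2 + (sinh t - t) • A ^ 3 := by
  rw [NormedSpace.exp_eq_tsum ℝ]
  refine HasSum.tsum_eq ?_
  have heven : HasSum (fun k ↦ ((2 * k)! : ℝ)⁻¹ • (t • A) ^ (2 * k))
      (1 + (cosh t - 1) • A ^ 2) := by
    convert ((hasSum_cosh t).smul_const (A ^ 2)).add (hasSum_ite_eq 0 (1 - A ^ 2)) using 1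
    · funext k
      rcases eq_or_ne k 0 with rfl | hk
      · simp
      · simp only [hk, if_false, add_zero, smul_pow, pow_two_mul_of_pow_four_eq_sq hA hk,
          smul_smul, div_eq_inv_mul]
    · rw [sub_smul, one_smul]; abel
  have hodd : HasSum (fun k ↦ ((2 * k + 1)! : ℝ)⁻¹ • (t • A) ^ (2 * k + 1))
      (t • A + (sinh t - t) • A ^ 3) := by
    convert ((hasSum_sinh t).smul_const (A ^ 3)).add (hasSum_ite_eq 0 (t • (A - A ^ 3))) using 1
    · funext k
      rcases eq_or_ne k 0 with rfl | hk
      · simp [smul_sub]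
      · simp only [hk, if_false, add_zero, smul_pow, pow_two_mul_add_one_of_pow_four_eq_sq hA hk,
          smul_smul, div_eq_inv_mul]
    · rw [sub_smul, smul_sub]; abel
  rw [show 1 + t • A + (cosh t - 1) • A ^ 2 + (sinh t - t) • A ^ 3
      = (1 + (cosh t - 1) • A ^ 2) + (t • A + (sinh t - t) • A ^ 3) by abel]
  exact HasSum.even_add_odd (f := fun n ↦ (n ! : ℝ)⁻¹ • (t • A) ^ n) heven hodd

theorem Real.sinh_lt_mul_cosh_s16 {x : ℝ} (hx : 0 < x) : sinh x < x * cosh x := by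
  have hmono : StrictMonoOn (fun y ↦ y * cosh y - sinh y) (Set.Ici 0) := by
    refine strictMonoOn_of_deriv_pos (convex_Ici 0) (by fun_prop) fun y hy ↦ ?_
    rw [interior_Ici] at hy
    have hderiv : HasDerivAt (fun y ↦ y * cosh y - sinh y) (y * sinh y) y :=
      (((hasDerivAt_id' y).mul (hasDerivAt_cosh y)).sub (hasDerivAt_sinh y)).congr_deriv (by ring)
    rw [hderiv.deriv]
    exact mul_pos hy (sinh_pos_iff.mpr hy)
  simpa using hmono Set.self_mem_Ici hx.le hx

theorem Real.two_mul_cosh_sub_one_lt_mul_sinh {x : ℝ} (hx : 0 < x) :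
    2 * (cosh x - 1) < x * sinh x := by
  obtain ⟨u, hu, rfl⟩ : ∃ u, 0 < u ∧ x = 2 * u := ⟨x / 2, by positivity, by ring⟩
  have hsinh : 0 < sinh u := sinh_pos_iff.mpr hu
  calc 2 * (cosh (2 * u) - 1) = 4 * sinh u * sinh u := by
        rw [cosh_two_mul, cosh_sq]; ring
    _ < 4 * sinh u * (u * cosh u) := by gcongr; exact sinh_lt_mul_cosh_s16 hu
    _ = 2 * u * sinh (2 * u) := by rw [sinh_two_mul]; ring

def hamiltonianMatrix : Matrix (Fin 4) (Fin 4) ℝ :=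
  !![0, 1, 0, 0; 0, 0, 0, -1; 0, 0, 0, 0; 0, -1, -1, 0]

theorem hamiltonianMatrix_sq :
    hamiltonianMatrix ^ 2 = !![0, 0, 0, -1; 0, 1, 1, 0; 0, 0, 0, 0; 0, 0, 0, 1] := by
  ext i j; fin_cases i <;> fin_cases j <;>
    simp [hamiltonianMatrix, sq, Matrix.mul_apply, Fin.sum_univ_four]

theorem hamiltonianMatrix_pow_three :
    hamiltonianMatrix ^ 3 = !![0, 1, 1, 0; 0, 0, 0, -1; 0, 0, 0, 0; 0, -1, -1, 0] := by
  ext i j; fin_cases i <;> fin_cases j <;>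
    simp [hamiltonianMatrix, pow_succ, Matrix.mul_apply, Fin.sum_univ_four]

theorem hamiltonianMatrix_pow_four : hamiltonianMatrix ^ 4 = hamiltonianMatrix ^ 2 := by
  rw [pow_succ, hamiltonianMatrix_pow_three, hamiltonianMatrix_sq]
  ext i j; fin_cases i <;> fin_cases j <;>
    simp [hamiltonianMatrix, Matrix.mul_apply, Fin.sum_univ_four]

theorem exp_smul_hamiltonianMatrix_mulVec (t q v l₁ l₂ : ℝ) :
    NormedSpace.exp (t • hamiltonianMatrix) *ᵥ ![q, v, l₁, l₂] =
      ![q + sinh t * v + (sinh t - t) * l₁ + (1 - cosh t) * l₂,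
        cosh t * v + (cosh t - 1) * l₁ - sinh t * l₂,
        l₁,
        -sinh t * (v + l₁) + cosh t * l₂] := by
  rw [exp_smul_of_pow_four_eq_sq hamiltonianMatrix_pow_four, hamiltonianMatrix_sq,
    hamiltonianMatrix_pow_three]
  ext i; fin_cases i <;>
    simp [hamiltonianMatrix, mulVec, dotProduct, Fin.sum_univ_four] <;> ring

/-- Solution of the two-point boundary value problem: for `T > 0` and boundary
data `q₀, q_T, v₀, v_T`, with `D = 2 (cosh T - 1) - T sinh T ≠ 0`,
`lam₁ = (sinh T (q_T - q₀) + (1 - cosh T)(v₀ + v_T)) / D` and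
`lam₂ = (cosh T v₀ - v_T + (cosh T - 1) lam₁) / sinh T`, the vector
`x(T) = exp (T • H) (q₀, v₀, lam₁, lam₂)ᵀ` satisfies `x(T)₁ = q_T`, `x(T)₂ = v_T`. -/
theorem two_point_bvp_solution (T : ℝ) (hT : 0 < T) (q₀ qT v₀ vT : ℝ)
    (H : Matrix (Fin 4) (Fin 4) ℝ)
    (hH : H = !![0, 1, 0, 0; 0, 0, 0, -1; 0, 0, 0, 0; 0, -1, -1, 0])
    (D lam₁ lam₂ : ℝ)
    (hD : D = 2 * (Real.cosh T - 1) - T * Real.sinh T)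
    (hlam₁ : lam₁ = (Real.sinh T * (qT - q₀) + (1 - Real.cosh T) * (v₀ + vT)) / D)
    (hlam₂ : lam₂ = (Real.cosh T * v₀ - vT + (Real.cosh T - 1) * lam₁) / Real.sinh T) :
    D ≠ 0 ∧ Real.sinh T ≠ 0 ∧
      (NormedSpace.exp (T • H)).mulVec ![q₀, v₀, lam₁, lam₂] 0 = qT ∧
      (NormedSpace.exp (T • H)).mulVec ![q₀, v₀, lam₁, lam₂] 1 = vT := by
  obtain rfl : H = hamiltonianMatrix := hH
  have hS : sinh T ≠ 0 := (sinh_pos_iff.mpr hT).ne'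
  have hD₀ : D ≠ 0 := hD ▸ (sub_neg.mpr (two_mul_cosh_sub_one_lt_mul_sinh hT)).ne
  have h₁ : D * lam₁ = sinh T * (qT - q₀) + (1 - cosh T) * (v₀ + vT) := by
    rw [hlam₁, mul_div_cancel₀ _ hD₀]
  have h₂ : sinh T * lam₂ = cosh T * v₀ - vT + (cosh T - 1) * lam₁ := by
    rw [hlam₂, mul_div_cancel₀ _ hS]
  refine ⟨hD₀, hS, ?_, ?_⟩ <;>
    simp only [exp_smul_hamiltonianMatrix_mulVec, cons_val_zero, cons_val_one]
  · -- times `sinh T`, the coefficient of `lam₁` is `sinh T ^ 2 - T * sinh T - (cosh T - 1) ^ 2 = D`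
    apply mul_left_cancel₀ hS
    linear_combination h₁ + (1 - cosh T) * h₂ + (-v₀ - lam₁) * cosh_sq_sub_sinh_sq T - lam₁ * hD
  · linear_combination -h₂
end
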